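/- Part (1) of the main theorem: under hypotheses (i)–(vi) of the stated setting, for every n ≥ 1 the operator I_n := Tr_{1…n}[ L_1 ⋯ L_n · R̂_{12}(x−2γh^{(3,n)}) R̂_{23}(x−2γh^{(4,n)}) ⋯ R̂_{k,k+1}(x−2γh^{(k+2,n)}) ⋯ R̂_{n−1,n}(x) ] maps the zero-weight subspace V_0 into itself: I_n(V_0) ⊆ V_0. -/

import Mathlib

/- STATEMENT 12: Part (1) of the main theorem: under hypotheses (i)–(vi),
   for every n ≥ 1 the operator
   I_n = Tr_{1…n}[ L_1 ⋯ L_n R̂_{12}(x−2γh^{(3,n)}) ⋯ R̂_{n−1,n}(x) ]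
   maps the zero-weight subspace V₀ into itself. -/

noncomputable section
open Matrix Complex
open scoped BigOperators

variable (N : ℕ) (γ : ℂ)
variable {W : Type} [AddCommGroup W] [Module ℂ W]

/- ---- placement of a matrix in two of three factors, with dynamical shift ---- -/

def sh12 (S : (Fin N → ℂ) → Matrix (Fin N × Fin N) (Fin N × Fin N) ℂ)
    (x : Fin N → ℂ) (s : ℂ) :
    Matrix (Fin N × Fin N × Fin N) (Fin N × Fin N × Fin N) ℂ :=
  fun p q => if p.2.2 = q.2.2 then
    S (x + s • (Pi.single q.2.2 1 : Fin N → ℂ)) (p.1, p.2.1) (q.1, q.2.1) else 0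

def sh13 (S : (Fin N → ℂ) → Matrix (Fin N × Fin N) (Fin N × Fin N) ℂ)
    (x : Fin N → ℂ) (s : ℂ) :
    Matrix (Fin N × Fin N × Fin N) (Fin N × Fin N × Fin N) ℂ :=
  fun p q => if p.2.1 = q.2.1 then
    S (x + s • (Pi.single q.2.1 1 : Fin N → ℂ)) (p.1, p.2.2) (q.1, q.2.2) else 0

def sh23 (S : (Fin N → ℂ) → Matrix (Fin N × Fin N) (Fin N × Fin N) ℂ)
    (x : Fin N → ℂ) (s : ℂ) :
    Matrix (Fin N × Fin N × Fin N) (Fin N × Fin N × Fin N) ℂ :=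
  fun p q => if p.1 = q.1 then
    S (x + s • (Pi.single q.1 1 : Fin N → ℂ)) (p.2.1, p.2.2) (q.2.1, q.2.2) else 0

/-- (iii) the dynamical Yang–Baxter equation -/
def DYBE (R : (Fin N → ℂ) → Matrix (Fin N × Fin N) (Fin N × Fin N) ℂ) : Prop :=
  ∀ x : Fin N → ℂ,
    sh12 N R x γ * sh13 N R x (-γ) * sh23 N R x γ =
    sh23 N R x (-γ) * sh13 N R x γ * sh12 N R x (-γ)

/-- (i) zero-weight condition -/
def ZeroWeight (R : (Fin N → ℂ) → Matrix (Fin N × Fin N) (Fin N × Fin N) ℂ) : Prop :=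
  ∀ x : Fin N → ℂ, ∀ i j k l : Fin N,
    (Pi.single i 1 : Fin N → ℂ) + Pi.single j 1 ≠
      (Pi.single k 1 : Fin N → ℂ) + Pi.single l 1 →
    R x (i, j) (k, l) = 0

/-- (ii) translation condition -/
def TransInv (R : (Fin N → ℂ) → Matrix (Fin N × Fin N) (Fin N × Fin N) ℂ) : Prop :=
  ∀ x : Fin N → ℂ, ∀ t : ℂ, ∀ i j k l : Fin N,
    R (x + t • ((Pi.single i 1 : Fin N → ℂ) + Pi.single j 1)) (i, j) (k, l) =
      R x (i, j) (k, l)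

/- ---- the quantum space V = (ℂ^N → W) and its structure ---- -/

/-- the quantum space: W-valued functions on ℂ^N -/
abbrev Vsp (N : ℕ) (W : Type) [AddCommGroup W] [Module ℂ W] := (Fin N → ℂ) → W

/-- membership in the zero-weight subspace V₀ (functions valued in W₀) -/
def inV0 (π : (Fin N → ℂ) → Module.End ℂ W) (u : Vsp N W) : Prop :=
  ∀ x, π 0 (u x) = u x

/-- the dynamical scalar operator f(x + s·h^{(q)}) on V -/
def Phi (M : Finset (Fin N → ℂ)) (π : (Fin N → ℂ) → Module.End ℂ W)
    (s : ℂ) (f : (Fin N → ℂ) → ℂ) (u : Vsp N W) : Vsp N W :=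
  fun x => ∑ μ ∈ M, f (x + s • μ) • π μ (u x)

/-- L₁ = Σ e_{ab}⊗Id⊗L_{ab} on functions ℂ^N → ℂ^N⊗ℂ^N⊗W -/
def Lax1 (L : Fin N → Fin N → (Vsp N W →ₗ[ℂ] Vsp N W))
    (u : (Fin N → ℂ) → Fin N × Fin N → W) : (Fin N → ℂ) → Fin N × Fin N → W :=
  fun x p => ∑ b : Fin N, L p.1 b (fun y => u y (b, p.2)) x

/-- L₂ = Σ Id⊗e_{ab}⊗L_{ab} -/
def Lax2 (L : Fin N → Fin N → (Vsp N W →ₗ[ℂ] Vsp N W))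
    (u : (Fin N → ℂ) → Fin N × Fin N → W) : (Fin N → ℂ) → Fin N × Fin N → W :=
  fun x p => ∑ b : Fin N, L p.2 b (fun y => u y (p.1, b)) x

/-- R₁₂(x + s·h^{(q)}) acting on functions ℂ^N → ℂ^N⊗ℂ^N⊗W -/
def Rop (R : (Fin N → ℂ) → Matrix (Fin N × Fin N) (Fin N × Fin N) ℂ)
    (M : Finset (Fin N → ℂ)) (π : (Fin N → ℂ) → Module.End ℂ W) (s : ℂ)
    (u : (Fin N → ℂ) → Fin N × Fin N → W) : (Fin N → ℂ) → Fin N × Fin N → W :=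
  fun x p => ∑ r : Fin N × Fin N, ∑ μ ∈ M, R (x + s • μ) p r • π μ (u x r)

/- ---- the commuting operators I_n ---- -/

/-- sum of basis vectors δ_{σ(i)} over factors with 0-based positions in [s,t) -/
def hsum (p : ℕ) (s t : ℕ) (σ : Fin p → Fin N) : Fin N → ℂ :=
  ∑ i : Fin p, if s ≤ (i : ℕ) ∧ (i : ℕ) < t then (Pi.single (σ i) 1 : Fin N → ℂ) else 0

/-- R̂ = P·R placed in (0-based) factors a, b of (ℂ^N)^{⊗p}, with σ-dependent
    evaluation point `f σ` -/
def RhatPair (R : (Fin N → ℂ) → Matrix (Fin N × Fin N) (Fin N × Fin N) ℂ)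
    (p : ℕ) (a b : ℕ) (f : (Fin p → Fin N) → Fin N → ℂ) :
    Matrix (Fin p → Fin N) (Fin p → Fin N) ℂ :=
  if h : a < p ∧ b < p then
    Matrix.of fun σ σ' =>
      if ∀ i : Fin p, (i : ℕ) ≠ a → (i : ℕ) ≠ b → σ i = σ' i then
        R (f σ) (σ ⟨b, h.2⟩, σ ⟨a, h.1⟩) (σ' ⟨a, h.1⟩, σ' ⟨b, h.2⟩)
      else 0
  else 1

/-- 𝓘^{(k,l)} (1-based labels k..l):
    R̂_{k,k+1}(·−2γh^{(k+2,l)}) ⋯ R̂_{l−1,l}(·), with evaluation point `base σ` -/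
def calI (R : (Fin N → ℂ) → Matrix (Fin N × Fin N) (Fin N × Fin N) ℂ)
    (p : ℕ) (k l : ℕ) (base : (Fin p → Fin N) → Fin N → ℂ) :
    Matrix (Fin p → Fin N) (Fin p → Fin N) ℂ :=
  ((List.range' k (l - k)).map (fun j =>
    RhatPair N R p (j - 1) j
      (fun σ => base σ - (2 * γ) • hsum N p (j + 1) l σ))).prod

/-- the Lax operator L placed in auxiliary factor a of (ℂ^N)^{⊗n} ⊗ V -/
def LopAux (L : Fin N → Fin N → (Vsp N W →ₗ[ℂ] Vsp N W)) (n : ℕ) (a : Fin n)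
    (u : (Fin N → ℂ) → (Fin n → Fin N) → W) : (Fin N → ℂ) → (Fin n → Fin N) → W :=
  fun x σ => ∑ b : Fin N, L (σ a) b (fun y => u y (Function.update σ a b)) x

/-- the composition L₁ L₂ ⋯ L_n -/
def LopChain (L : Fin N → Fin N → (Vsp N W →ₗ[ℂ] Vsp N W)) (n : ℕ) :
    ((Fin N → ℂ) → (Fin n → Fin N) → W) → ((Fin N → ℂ) → (Fin n → Fin N) → W) :=
  (List.finRange n).foldr (fun a f => LopAux N L n a ∘ f) id

/-- multiplication by a matrix-valued function of x on the auxiliary factors -/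
def mulMat (n : ℕ) (A : (Fin N → ℂ) → Matrix (Fin n → Fin N) (Fin n → Fin N) ℂ)
    (u : (Fin N → ℂ) → (Fin n → Fin N) → W) : (Fin N → ℂ) → (Fin n → Fin N) → W :=
  fun x σ => ∑ σ' : Fin n → Fin N, A x σ σ' • u x σ'

/-- embedding of V into (ℂ^N)^{⊗n} ⊗ V at auxiliary basis index σ -/
def emb (n : ℕ) (σ : Fin n → Fin N) (u : Vsp N W) :
    (Fin N → ℂ) → (Fin n → Fin N) → W :=
  fun x σ' => if σ' = σ then u x else 0

/-- I_n = Tr_{1…n}[ L₁ ⋯ L_n R̂_{12}(x−2γh^{(3,n)}) ⋯ R̂_{n−1,n}(x) ] ∈ End(V) -/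
def In (R : (Fin N → ℂ) → Matrix (Fin N × Fin N) (Fin N × Fin N) ℂ)
    (L : Fin N → Fin N → (Vsp N W →ₗ[ℂ] Vsp N W)) (n : ℕ) (u : Vsp N W) : Vsp N W :=
  fun x => ∑ σ : Fin n → Fin N,
    LopChain N L n
      (mulMat N n (fun y => calI N γ R n 1 n (fun _ => y)) (emb N n σ u)) x σ

/-! The total weight of an element of `(ℂ^N)^{⊗n} ⊗ V` at auxiliary basis index `σ` is the weight
of its `W`-component plus `Σ_i δ_{σ i}`. Each `R̂` factor conserves the auxiliary weight by the
zero-weight condition (i), and `L_{ab}` moves `δ_b` from the auxiliary factor into `W` in exchange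
for `δ_a` by (iv), so the total weight is conserved along `L_1 ⋯ L_n R̂ ⋯ R̂`. The trace only
reads the entries whose auxiliary index is the one it started from, so there the `W`-weight is
unchanged. -/

namespace Matrix

def RespectsGrading {κ X R : Type*} [Zero R] (A : Matrix κ κ R) (w : κ → X) : Prop :=
  ∀ i j, A i j ≠ 0 → w i = w j

variable {κ X R : Type*} {w : κ → X}

theorem respectsGrading_one [DecidableEq κ] [Zero R] [One R] :
    RespectsGrading (1 : Matrix κ κ R) w := by
  intro i j h
  by_contra hij
  exact h (one_apply_ne (fun e => hij (congrArg w e)))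

theorem RespectsGrading.mul [Fintype κ] [NonUnitalNonAssocSemiring R] {A B : Matrix κ κ R}
    (hA : RespectsGrading A w) (hB : RespectsGrading B w) : RespectsGrading (A * B) w := by
  intro i j h
  obtain ⟨k, -, hk⟩ := Finset.exists_ne_zero_of_sum_ne_zero h
  exact (hA i k (left_ne_zero_of_mul hk)).trans (hB k j (right_ne_zero_of_mul hk))

theorem respectsGrading_list_prod [Fintype κ] [DecidableEq κ] [Semiring R]
    (l : List (Matrix κ κ R)) (hl : ∀ A ∈ l, RespectsGrading A w) :
    RespectsGrading l.prod w := by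
  induction l with
  | nil => exact respectsGrading_one
  | cons A l ih =>
    rw [List.prod_cons]
    exact (hl A List.mem_cons_self).mul (ih fun B hB => hl B (List.mem_cons_of_mem A hB))

end Matrix

def auxWeight {ι : Type*} [Fintype ι] (σ : ι → Fin N) : Fin N → ℂ :=
  ∑ i, Pi.single (σ i) 1

theorem auxWeight_update {ι : Type*} [Fintype ι] [DecidableEq ι] (σ : ι → Fin N) (a : ι)
    (b : Fin N) :
    auxWeight N (Function.update σ a b) = auxWeight N σ - Pi.single (σ a) 1 + Pi.single b 1 := by
  have hterms : (fun i => (Pi.single (Function.update σ a b i) 1 : Fin N → ℂ)) =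
      Function.update (fun i => Pi.single (σ i) 1) a (Pi.single b 1) := by
    funext i
    rcases eq_or_ne i a with rfl | hi
    · simp
    · simp [Function.update_of_ne hi]
  simp only [auxWeight, hterms, Finset.sum_update_of_mem (Finset.mem_univ a),
    Finset.sum_eq_sum_sdiff_singleton_add (Finset.mem_univ a) (fun i => Pi.single (σ i) 1)]
  abel

theorem auxWeight_eq_of_eqOn_compl_pair {ι : Type*} [Fintype ι] [DecidableEq ι]
    {σ σ' : ι → Fin N} {a b : ι} (hab : a ≠ b) (hoff : ∀ i, i ≠ a → i ≠ b → σ i = σ' i)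
    (hpair : (Pi.single (σ a) 1 : Fin N → ℂ) + Pi.single (σ b) 1 =
      Pi.single (σ' a) 1 + Pi.single (σ' b) 1) :
    auxWeight N σ = auxWeight N σ' := by
  have hσ' : σ' = Function.update (Function.update σ a (σ' a)) b (σ' b) := by
    funext i
    by_cases hib : i = b
    · simp [hib]
    by_cases hia : i = a
    · simp [hia, hab]
    simp [hia, hib, hoff i hia hib]
  rw [hσ', auxWeight_update, auxWeight_update, Function.update_of_ne hab.symm]
  linear_combination hpair

theorem respectsGrading_rhatPair (R : (Fin N → ℂ) → Matrix (Fin N × Fin N) (Fin N × Fin N) ℂ)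
    (hzw : ZeroWeight N R) {p a b : ℕ} (hab : a ≠ b) (f : (Fin p → Fin N) → Fin N → ℂ) :
    (RhatPair N R p a b f).RespectsGrading (auxWeight N) := by
  unfold RhatPair
  split_ifs with hp
  · intro σ σ' h
    rw [of_apply] at h
    split_ifs at h with hoff
    · refine auxWeight_eq_of_eqOn_compl_pair N (a := ⟨a, hp.1⟩) (b := ⟨b, hp.2⟩)
        (fun e => hab (congrArg Fin.val e))
        (fun i hia hib => hoff i (fun e => hia (Fin.ext e)) (fun e => hib (Fin.ext e))) ?_
      rw [add_comm]
      by_contra hne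
      exact h (hzw _ _ _ _ _ hne)
    · exact absurd rfl h
  · exact respectsGrading_one

theorem respectsGrading_calI (R : (Fin N → ℂ) → Matrix (Fin N × Fin N) (Fin N × Fin N) ℂ)
    (hzw : ZeroWeight N R) {p k : ℕ} (l : ℕ) (hk : 1 ≤ k) (base : (Fin p → Fin N) → Fin N → ℂ) :
    (calI N γ R p k l base).RespectsGrading (auxWeight N) := by
  refine respectsGrading_list_prod _ fun A hA => ?_
  obtain ⟨j, hj, rfl⟩ := List.mem_map.mp hA
  have hj1 : 1 ≤ j := hk.trans (List.mem_range'_1.mp hj).1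
  exact respectsGrading_rhatPair N R hzw (by omega) _

section TotalWeight

variable {n : ℕ} (π : (Fin N → ℂ) → Module.End ℂ W)

def HasTotalWeight (c : Fin N → ℂ) (v : (Fin N → ℂ) → (Fin n → Fin N) → W) : Prop :=
  ∀ x τ, π (c - auxWeight N τ) (v x τ) = v x τ

def LaxGraded (L : Fin N → Fin N → (Vsp N W →ₗ[ℂ] Vsp N W)) : Prop :=
  ∀ (a b : Fin N) (μ : Fin N → ℂ) (u : Vsp N W), (∀ x, π μ (u x) = u x) →
    ∀ x, π (μ - (Pi.single a 1 : Fin N → ℂ) + Pi.single b 1) (L a b u x) = L a b u x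

variable {π} {L : Fin N → Fin N → (Vsp N W →ₗ[ℂ] Vsp N W)}

theorem HasTotalWeight.lopAux {c : Fin N → ℂ} {v : (Fin N → ℂ) → (Fin n → Fin N) → W}
    (hgr : LaxGraded N π L) (hv : HasTotalWeight N π c v) (a : Fin n) :
    HasTotalWeight N π c (LopAux N L n a v) := by
  intro x τ
  simp only [LopAux, map_sum]
  refine Finset.sum_congr rfl fun b _ => ?_
  have hweight : c - auxWeight N (Function.update τ a b) - Pi.single (τ a) 1 + Pi.single b 1 =
      c - auxWeight N τ := by
    rw [auxWeight_update]
    abel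
  rw [← hweight]
  exact hgr (τ a) b _ _ (fun y => hv y _) x

theorem HasTotalWeight.lopChain {c : Fin N → ℂ} {v : (Fin N → ℂ) → (Fin n → Fin N) → W}
    (hgr : LaxGraded N π L) (hv : HasTotalWeight N π c v) :
    HasTotalWeight N π c (LopChain N L n v) := by
  unfold LopChain
  induction List.finRange n with
  | nil => exact hv
  | cons a l ih => exact ih.lopAux N hgr a

theorem hasTotalWeight_mulMat_emb {A : (Fin N → ℂ) → Matrix (Fin n → Fin N) (Fin n → Fin N) ℂ}
    (hA : ∀ x, (A x).RespectsGrading (auxWeight N)) {μ : Fin N → ℂ} {u : Vsp N W}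
    (hu : ∀ x, π μ (u x) = u x) (σ : Fin n → Fin N) :
    HasTotalWeight N π (μ + auxWeight N σ) (mulMat N n A (emb N n σ u)) := by
  intro x τ
  have hentry : mulMat N n A (emb N n σ u) x τ = A x τ σ • u x := by
    simp [mulMat, emb]
  rw [hentry]
  by_cases hτσ : auxWeight N τ = auxWeight N σ
  · rw [hτσ, add_sub_cancel_right, map_smul, hu x]
  · rw [not_imp_comm.mp (hA x τ σ) hτσ, zero_smul, map_zero]

end TotalWeight

theorem In_preserves_weight (R : (Fin N → ℂ) → Matrix (Fin N × Fin N) (Fin N × Fin N) ℂ)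
    (hzw : ZeroWeight N R) {π : (Fin N → ℂ) → Module.End ℂ W}
    {L : Fin N → Fin N → (Vsp N W →ₗ[ℂ] Vsp N W)} (hgr : LaxGraded N π L) (n : ℕ)
    {μ : Fin N → ℂ} {u : Vsp N W} (hu : ∀ x, π μ (u x) = u x) (x : Fin N → ℂ) :
    π μ (In N γ R L n u x) = In N γ R L n u x := by
  simp only [In, map_sum]
  refine Finset.sum_congr rfl fun σ _ => ?_
  have hcalI (y : Fin N → ℂ) := respectsGrading_calI N γ R hzw (p := n) n le_rfl fun _ => y
  have hσ := (hasTotalWeight_mulMat_emb N hcalI hu σ).lopChain N hgr x σ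
  rwa [add_sub_cancel_right] at hσ

theorem In_preserves_zero_weight_subspace
    (R : (Fin N → ℂ) → Matrix (Fin N × Fin N) (Fin N × Fin N) ℂ)
    (hzw : ZeroWeight N R)
    (π : (Fin N → ℂ) → Module.End ℂ W)
    (L : Fin N → Fin N → (Vsp N W →ₗ[ℂ] Vsp N W))
    -- (iv) grading condition on L
    (hgr : ∀ (a b : Fin N) (μ : Fin N → ℂ) (u : Vsp N W),
      (∀ x, π μ (u x) = u x) →
      ∀ x, π (μ - (Pi.single a 1 : Fin N → ℂ) + Pi.single b 1) (L a b u x) = L a b u x) :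
    ∀ n : ℕ, 1 ≤ n → ∀ u : Vsp N W, inV0 N π u → inV0 N π (In N γ R L n u) :=
  fun n _ _ hu => In_preserves_weight N γ R hzw hgr n hu
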